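/- arXiv:1903.09577 — 12 statements merged into one kernel-verified Lean document; each statement's English description precedes it below -/
import Mathlib

section
/- If φ : A → B is a mixed Jordan homomorphism between (complex, associative) algebras, then φ is a mixed 2n-Jordan homomorphism for every positive integer n; that is, φ(a^(2n) b) = φ(a)^(2n) φ(b) for all a, b ∈ A. -/
/-- A mixed Jordan homomorphism (φ(a²b) = φ(a)²φ(b)) between complex algebras
is a mixed 2n-Jordan homomorphism for every positive integer n. -/
theorem mixed_jordan_is_mixed_two_n_jordan
    {A B : Type*} [Ring A] [Ring B] [Algebra ℂ A] [Algebra ℂ B]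
    (φ : A →ₗ[ℂ] B)
    (hφ : ∀ a b : A, φ (a ^ 2 * b) = φ a ^ 2 * φ b) :
    ∀ n : ℕ, 0 < n → ∀ a b : A, φ (a ^ (2 * n) * b) = φ a ^ (2 * n) * φ b := by
  intro n hn
  induction n with
  | zero => omega
  | succ m ih =>
    intro a b
    rcases Nat.eq_zero_or_pos m with h | h
    · subst h; simpa using hφ a b
    · have key : a ^ (2 * (m + 1)) * b = a ^ 2 * (a ^ (2 * m) * b) := by
        rw [← mul_assoc, ← pow_add]; ring_nf
      rw [key, hφ, ih h a b, ← mul_assoc, ← pow_add]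
      ring_nf
end

section
/- Let φ : A → B be a mixed Jordan homomorphism between algebras where A is unital with identity e. Then the map ψ : A → B defined by ψ(x) = φ(x) φ(e) is an algebra homomorphism, i.e., ψ(ab) = ψ(a)ψ(b) for all a, b ∈ A. -/
private lemma half_cancel {B : Type*} [AddCommGroup B] [Module ℂ B]
    {x y : B} (h : x + x = y + y) : x = y := by
  have h2 : (2:ℂ) • x = (2:ℂ) • y := by rw [two_smul, two_smul]; exact h
  have := congrArg (fun z => ((2:ℂ)⁻¹) • z) h2
  simpa [smul_smul] using this

/-- If φ is a mixed Jordan homomorphism and A is unital with identity 1,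
then ψ(x) := φ(x)φ(1) is multiplicative. -/
theorem mixed_jordan_induced_map_is_hom
    {A B : Type*} [Ring A] [Ring B] [Algebra ℂ A] [Algebra ℂ B]
    (φ : A →ₗ[ℂ] B)
    (hφ : ∀ a b : A, φ (a ^ 2 * b) = φ a ^ 2 * φ b) :
    ∀ a b : A, φ (a * b) * φ 1 = (φ a * φ 1) * (φ b * φ 1) := by
  set e := φ 1 with he
  -- e^3 = e
  have he3 : e * e * e = e := by
    have := hφ 1 1
    simpa [pow_two] using this.symm
  -- e^2 is a left identity on the range
  have h5 : ∀ x : A, e * e * φ x = φ x := by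
    intro x
    have := hφ 1 x
    simpa [pow_two] using this.symm
  -- polarization: 2 φ(ab) = φ(a) e φ(b) + e φ(a) φ(b)
  have h4 : ∀ a b : A, φ (a * b) + φ (a * b) = φ a * e * φ b + e * (φ a * φ b) := by
    intro a b
    have h1 := hφ (a + 1) b
    have hexp : (a + 1) ^ 2 * b = a ^ 2 * b + (a * b + a * b) + b := by noncomm_ring
    rw [hexp] at h1
    have h1' : φ a ^ 2 * φ b + (φ (a * b) + φ (a * b)) + φ b
        = φ a ^ 2 * φ b + (φ a * e * φ b + e * (φ a * φ b)) + φ b := by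
      calc φ a ^ 2 * φ b + (φ (a * b) + φ (a * b)) + φ b
          = φ (a ^ 2 * b + (a * b + a * b) + b) := by rw [← hφ a b]; simp [map_add]
        _ = φ (a + 1) ^ 2 * φ b := h1
        _ = φ a ^ 2 * φ b + (φ a * e * φ b + e * (φ a * φ b)) + e * e * φ b := by
            rw [map_add, ← he]; noncomm_ring
        _ = φ a ^ 2 * φ b + (φ a * e * φ b + e * (φ a * φ b)) + φ b := by rw [h5 b]
    exact add_left_cancel (add_right_cancel h1')
  -- with b = 1: 2 φ(a) = φ(a) e e + e φ(a) e
  have h6 : ∀ a : A, φ a + φ a = φ a * e * e + e * (φ a * e) := by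
    intro a
    simpa using h4 a 1
  -- φ(a) e = e (φ(a) e) e
  have h8 : ∀ a : A, φ a * e = e * (φ a * e) * e := by
    intro a
    have h := congrArg (· * e) (h6 a)
    simp only [add_mul] at h
    rw [show φ a * e * e * e = φ a * e by rw [mul_assoc (φ a) e e, mul_assoc (φ a) (e*e) e, he3]] at h
    exact add_left_cancel h
  -- e commutes with everything in the range
  have hcomm : ∀ a : A, e * φ a = φ a * e := by
    intro a
    have h := congrArg (e * ·) (h6 a)
    simp only [mul_add] at h
    have k1 : e * (e * (φ a * e)) = φ a * e := by
      rw [← mul_assoc, ← mul_assoc, mul_assoc (e * e) (φ a) e, ← mul_assoc, h5 a]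
    have k2 : e * (φ a * e * e) = φ a * e := by
      rw [← mul_assoc]; exact (h8 a).symm
    rw [k1, k2] at h
    exact half_cancel h
  -- multiplicativity core: φ(ab) = φ(a) e φ(b)
  have hcore : ∀ a b : A, φ (a * b) = φ a * e * φ b := by
    intro a b
    apply half_cancel
    rw [h4 a b, ← mul_assoc, hcomm a]
  intro a b
  rw [hcore a b, mul_assoc (φ a * e) (φ b) e]
end

section
/- Let φ : A → B be an n-Jordan homomorphism from a unital Banach algebra A (with identity e) into a Banach algebra B such that φ(a)φ(b) = φ(b)φ(a) for all a, b ∈ A (B is φ-commutative). Then φ(a) = φ(e)^(n-1) φ(a) = φ(a) φ(e)^(n-1) for all a ∈ A. -/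
/-- For an n-Jordan homomorphism φ from a unital Banach algebra into a
φ-commutative Banach algebra, φ(a) = φ(1)^(n-1) φ(a) = φ(a) φ(1)^(n-1). -/
theorem nJordan_phiComm_unit_power
    {A B : Type*} [NormedRing A] [NormedAlgebra ℂ A] [CompleteSpace A]
    [NormedRing B] [NormedAlgebra ℂ B] [CompleteSpace B]
    (n : ℕ) (hn : 2 ≤ n)
    (φ : A →ₗ[ℂ] B)
    (hJ : ∀ a : A, φ (a ^ n) = φ a ^ n)
    (hcomm : ∀ a b : A, φ a * φ b = φ b * φ a) :
    ∀ a : A, φ a = φ 1 ^ (n - 1) * φ a ∧ φ a = φ a * φ 1 ^ (n - 1) := by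
  intro a
  -- the "coefficients" of the polynomial identity
  set d : ℕ → B := fun k => φ (a ^ k) - φ a ^ k * φ 1 ^ (n - k) with hd
  -- key polynomial identity
  have key : ∀ t : ℂ,
      ∑ k ∈ Finset.range (n + 1), ((n.choose k : ℂ) * t ^ k) • d k = 0 := by
    intro t
    have hcA : Commute (t • a) (1 : A) := Commute.one_right _
    have hA : ((t • a) + 1 : A) ^ n
        = ∑ k ∈ Finset.range (n + 1), (n.choose k) • (t ^ k • a ^ k) := by
      rw [hcA.add_pow]
      refine Finset.sum_congr rfl fun k _ => ?_
      rw [one_pow, mul_one, smul_pow]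
      rw [(Nat.cast_commute (n.choose k) (t ^ k • a ^ k)).eq.symm, ← nsmul_eq_mul]
    have hcB : Commute (t • φ a) (φ 1) := Commute.smul_left (hcomm a 1) t
    have hB : ((t • φ a) + φ 1) ^ n
        = ∑ k ∈ Finset.range (n + 1), (n.choose k) • (t ^ k • (φ a ^ k * φ 1 ^ (n - k))) := by
      rw [hcB.add_pow]
      refine Finset.sum_congr rfl fun k _ => ?_
      rw [smul_pow, smul_mul_assoc]
      rw [(Nat.cast_commute (n.choose k) (t ^ k • (φ a ^ k * φ 1 ^ (n - k)))).eq.symm,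
        ← nsmul_eq_mul]
    have hJ' : φ (((t • a) + 1) ^ n) = ((t • φ a) + φ 1) ^ n := by
      rw [hJ, map_add, map_smul]
    have hφA : φ (((t • a) + 1) ^ n)
        = ∑ k ∈ Finset.range (n + 1), (n.choose k) • (t ^ k • φ (a ^ k)) := by
      rw [hA, map_sum]
      refine Finset.sum_congr rfl fun k _ => ?_
      rw [map_nsmul, map_smul]
    calc ∑ k ∈ Finset.range (n + 1), ((n.choose k : ℂ) * t ^ k) • d k
        = ∑ k ∈ Finset.range (n + 1),
            ((n.choose k) • (t ^ k • φ (a ^ k))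
              - (n.choose k) • (t ^ k • (φ a ^ k * φ 1 ^ (n - k)))) := by
          refine Finset.sum_congr rfl fun k _ => ?_
          rw [hd]
          simp only [smul_sub, mul_smul, ← Nat.cast_smul_eq_nsmul ℂ]
      _ = φ (((t • a) + 1) ^ n) - ((t • φ a) + φ 1) ^ n := by
          rw [Finset.sum_sub_distrib, hφA, hB]
      _ = 0 := by rw [hJ', sub_self]
  -- extract the coefficient of t^1 : it must vanish
  have hd1 : d 1 = 0 := by
    by_contra h
    obtain ⟨g, hg⟩ := SeparatingDual.exists_ne_zero (R := ℂ) h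
    set p : Polynomial ℂ :=
      ∑ k ∈ Finset.range (n + 1),
        Polynomial.C ((n.choose k : ℂ) * g (d k)) * Polynomial.X ^ k with hp
    have hpe : ∀ t : ℂ, p.eval t = 0 := by
      intro t
      have := congrArg g (key t)
      rw [map_sum, map_zero] at this
      rw [hp, Polynomial.eval_finset_sum, ← this]
      refine Finset.sum_congr rfl fun k _ => ?_
      simp [map_smul, smul_eq_mul]
      ring
    have hp0 : p = 0 := by
      apply Polynomial.funext
      intro t
      rw [hpe t, Polynomial.eval_zero]
    have hc1 : p.coeff 1 = (n.choose 1 : ℂ) * g (d 1) := by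
      rw [hp, Polynomial.finset_sum_coeff]
      rw [Finset.sum_eq_single 1]
      · simp
      · intro k hk hk1
        rw [Polynomial.coeff_C_mul, Polynomial.coeff_X_pow,
          if_neg (fun h => hk1 h.symm), mul_zero]
      · intro h1
        exact absurd (Finset.mem_range.2 (by omega)) h1
    rw [hp0, Polynomial.coeff_zero] at hc1
    have hn0 : (n.choose 1 : ℂ) ≠ 0 := by
      have hne : n ≠ 0 := by omega
      simp [Nat.choose_one_right, hne]
    have := (mul_eq_zero.mp hc1.symm).resolve_left hn0
    exact hg this
  have hd1' : φ a = φ a * φ 1 ^ (n - 1) := by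
    have := sub_eq_zero.mp hd1
    simpa using this
  have hcom1 : Commute (φ 1) (φ a) := hcomm 1 a
  have h2 : φ a = φ 1 ^ (n - 1) * φ a :=
    hd1'.trans ((hcom1.pow_left (n - 1)).eq).symm
  exact ⟨h2, hd1'⟩
end

section
/- Let φ : A → B be an n-Jordan homomorphism from a unital Banach algebra A (with identity e) into a Banach algebra B. Then φ(a²) = φ(a)² φ(e)^(n-2) for all a ∈ A. -/
/-- If a "polynomial" function with module coefficients vanishes for all complex `t`,
all coefficients vanish. Proved by inverting a Vandermonde matrix. -/
lemma vand_aux {B : Type*} [AddCommGroup B] [Module ℂ B] (n : ℕ) (b : ℕ → B)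
    (h : ∀ t : ℂ, ∑ k ∈ Finset.range (n+1), t ^ k • b k = 0) :
    ∀ k ≤ n, b k = 0 := by
  set V : Matrix (Fin (n+1)) (Fin (n+1)) ℂ :=
    Matrix.vandermonde (fun i => (i : ℂ)) with hV
  have hdet : IsUnit V.det := by
    rw [hV, Matrix.det_vandermonde, isUnit_iff_ne_zero]
    rw [Finset.prod_ne_zero_iff]
    intro i _
    rw [Finset.prod_ne_zero_iff]
    intro j hj
    have hij : (i : Fin (n+1)) < j := Finset.mem_Ioi.mp hj
    have hne : ((i : ℕ) : ℂ) ≠ ((j : ℕ) : ℂ) := by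
      have hv : (i : ℕ) ≠ (j : ℕ) := Fin.val_ne_of_ne hij.ne
      exact fun hh => hv (Nat.cast_injective hh)
    exact sub_ne_zero.mpr (Ne.symm hne)
  have hMV : V⁻¹ * V = 1 := Matrix.nonsing_inv_mul V hdet
  have hrow : ∀ i : Fin (n+1), ∑ k : Fin (n+1), V i k • b k = 0 := by
    intro i
    have := h (i : ℂ)
    rw [Finset.sum_range] at this
    simpa [hV, Matrix.vandermonde_apply] using this
  intro k hk
  have hkey : b k = ∑ j : Fin (n+1), ((1 : Matrix (Fin (n+1)) (Fin (n+1)) ℂ) ⟨k, by omega⟩ j) • b j := by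
    simp [Matrix.one_apply]
  rw [hkey, ← hMV]
  calc ∑ j : Fin (n+1), ((V⁻¹ * V) ⟨k, by omega⟩ j) • b j
      = ∑ j : Fin (n+1), ∑ i : Fin (n+1), (V⁻¹ ⟨k, by omega⟩ i * V i j) • b j := by
        simp [Matrix.mul_apply, Finset.sum_smul]
    _ = ∑ i : Fin (n+1), V⁻¹ ⟨k, by omega⟩ i • ∑ j : Fin (n+1), V i j • b j := by
        rw [Finset.sum_comm]
        simp [Finset.smul_sum, mul_smul]
    _ = 0 := by simp [hrow]

/-- For an n-Jordan homomorphism φ from a unital Banach algebra A into a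
Banach algebra B (with φ-commutativity), φ(a²) = φ(a)² φ(1)^(n-2). -/
theorem nJordan_square_formula
    {A B : Type*} [NormedRing A] [NormedAlgebra ℂ A] [CompleteSpace A]
    [NormedRing B] [NormedAlgebra ℂ B] [CompleteSpace B]
    (n : ℕ) (hn : 2 ≤ n)
    (φ : A →ₗ[ℂ] B)
    (hJ : ∀ a : A, φ (a ^ n) = φ a ^ n)
    (hcomm : ∀ a b : A, φ a * φ b = φ b * φ a) :
    ∀ a : A, φ (a ^ 2) = φ a ^ 2 * φ 1 ^ (n - 2) := by
  intro a
  -- binomial expansion on the A side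
  have hA : ∀ t : ℂ, (a + t • (1:A)) ^ n
      = ∑ m ∈ Finset.range (n+1), (t ^ (n-m) * (n.choose m : ℂ)) • a ^ m := by
    intro t
    have hc : Commute a (t • (1:A)) := by
      simp [Commute, SemiconjBy, mul_smul_comm, smul_mul_assoc]
    rw [hc.add_pow]
    refine Finset.sum_congr rfl fun m _ => ?_
    rw [smul_pow, one_pow, mul_smul_comm, mul_one, smul_mul_assoc]
    rw [(Nat.cast_commute (n.choose m) (a ^ m)).symm.eq, ← nsmul_eq_mul,
      ← Nat.cast_smul_eq_nsmul ℂ, smul_smul]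
  -- binomial expansion on the B side
  have hB : ∀ t : ℂ, (φ a + t • φ (1:A)) ^ n
      = ∑ m ∈ Finset.range (n+1), (t ^ (n-m) * (n.choose m : ℂ)) • (φ a ^ m * φ 1 ^ (n-m)) := by
    intro t
    have hc : Commute (φ a) (t • φ (1:A)) := by
      simp only [Commute, SemiconjBy, mul_smul_comm, smul_mul_assoc]
      rw [hcomm]
    rw [hc.add_pow]
    refine Finset.sum_congr rfl fun m _ => ?_
    rw [smul_pow, mul_smul_comm, smul_mul_assoc]
    rw [(Nat.cast_commute (n.choose m) (φ a ^ m * φ 1 ^ (n-m))).symm.eq, ← nsmul_eq_mul,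
      ← Nat.cast_smul_eq_nsmul ℂ, smul_smul]
  -- the vanishing polynomial identity
  have key : ∀ t : ℂ, ∑ m ∈ Finset.range (n+1),
      t ^ (n-m) • ((n.choose m : ℂ) • (φ (a ^ m) - φ a ^ m * φ 1 ^ (n-m))) = 0 := by
    intro t
    have h1 : φ ((a + t • (1:A)) ^ n) = (φ a + t • φ (1:A)) ^ n := by
      rw [hJ, map_add, map_smul]
    rw [hA t, hB t, map_sum] at h1
    simp only [map_smul] at h1
    calc ∑ m ∈ Finset.range (n+1),
          t ^ (n-m) • ((n.choose m : ℂ) • (φ (a ^ m) - φ a ^ m * φ 1 ^ (n-m)))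
        = ∑ m ∈ Finset.range (n+1),
            ((t ^ (n-m) * (n.choose m : ℂ)) • φ (a ^ m)
              - (t ^ (n-m) * (n.choose m : ℂ)) • (φ a ^ m * φ 1 ^ (n-m))) := by
          refine Finset.sum_congr rfl fun m _ => ?_
          rw [smul_smul, smul_sub]
      _ = 0 := by rw [Finset.sum_sub_distrib, h1, sub_self]
  -- reindex so that powers of t increase
  set b : ℕ → B := fun k =>
    (n.choose (n-k) : ℂ) • (φ (a ^ (n-k)) - φ a ^ (n-k) * φ 1 ^ k) with hb
  have key' : ∀ t : ℂ, ∑ k ∈ Finset.range (n+1), t ^ k • b k = 0 := by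
    intro t
    rw [← key t, ← Finset.sum_range_reflect
      (fun m => t ^ (n-m) • ((n.choose m : ℂ) • (φ (a ^ m) - φ a ^ m * φ 1 ^ (n-m)))) (n+1)]
    refine Finset.sum_congr rfl fun k hk => ?_
    have hk' : k ≤ n := Nat.lt_succ_iff.mp (Finset.mem_range.mp hk)
    simp only [hb, Nat.add_sub_cancel, Nat.sub_sub_self hk']
  have hb2 : b (n-2) = 0 := vand_aux n b key' (n-2) (Nat.sub_le n 2)
  simp only [hb, Nat.sub_sub_self hn] at hb2
  have hch : ((n.choose 2 : ℕ) : ℂ) ≠ 0 :=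
    Nat.cast_ne_zero.mpr (Nat.choose_pos hn).ne'
  have := (smul_eq_zero.mp hb2).resolve_left hch
  exact sub_eq_zero.mp this
end

section
/- Let φ : A → B be an n-Jordan homomorphism from a unital Banach algebra A into a φ-commutative Banach algebra B such that φ(x²) = 0 implies φ(x) = 0 for all x ∈ A. Then φ is an n-homomorphism: φ(a₁ a₂ ⋯ aₙ) = φ(a₁) φ(a₂) ⋯ φ(aₙ) for all a₁,…,aₙ ∈ A. -/
open Filter Topology in
private lemma coeff_zero_of_forall_ne {E : Type*} [NormedAddCommGroup E] [NormedSpace ℂ E] :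
    ∀ (m : ℕ) (b : ℕ → E), (∀ t : ℂ, t ≠ 0 → ∑ k ∈ Finset.range m, t ^ k • b k = 0) →
      ∀ k < m, b k = 0 := by
  intro m
  induction m with
  | zero => exact fun b _ k hk => absurd hk (Nat.not_lt_zero k)
  | succ m ih =>
    intro b h k hk
    have hcont : Continuous fun t : ℂ => ∑ k ∈ Finset.range (m + 1), t ^ k • b k :=
      continuous_finset_sum _ fun i _ => (continuous_pow i).smul continuous_const
    have hb0 : b 0 = 0 := by
      have e0 : ∑ k ∈ Finset.range (m + 1), (0 : ℂ) ^ k • b k = b 0 := by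
        rw [Finset.sum_eq_single 0]
        · simp
        · intro j _ hj
          rcases Nat.exists_eq_succ_of_ne_zero hj with ⟨i, rfl⟩
          simp [zero_pow]
        · simp
      have h1 : Tendsto (fun t : ℂ => ∑ k ∈ Finset.range (m + 1), t ^ k • b k)
          (𝓝[≠] 0) (𝓝 (b 0)) := by
        have := hcont.tendsto 0
        rw [e0] at this
        exact this.mono_left nhdsWithin_le_nhds
      have heq : (fun t : ℂ => ∑ k ∈ Finset.range (m + 1), t ^ k • b k)
          =ᶠ[𝓝[≠] (0 : ℂ)] fun _ => 0 := by
        filter_upwards [self_mem_nhdsWithin] with t ht using h t ht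
      have h2 : Tendsto (fun t : ℂ => ∑ k ∈ Finset.range (m + 1), t ^ k • b k)
          (𝓝[≠] 0) (𝓝 0) := (tendsto_congr' heq).mpr tendsto_const_nhds
      exact tendsto_nhds_unique h1 h2
    cases k with
    | zero => exact hb0
    | succ j =>
      refine ih (fun i => b (i + 1)) ?_ j (by omega)
      intro t ht
      have ht' := h t ht
      rw [Finset.sum_range_succ'] at ht'
      rw [hb0] at ht'
      simp only [pow_zero, one_smul, smul_zero, add_zero] at ht'
      have hts : t • ∑ i ∈ Finset.range m, t ^ i • b (i + 1) = 0 := by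
        rw [Finset.smul_sum]
        rw [← ht']
        exact Finset.sum_congr rfl fun i _ => by rw [smul_smul, ← pow_succ']
      have := congrArg (fun z => t⁻¹ • z) hts
      simpa [smul_smul, inv_mul_cancel₀ ht] using this


/-- An n-Jordan homomorphism from a unital Banach algebra into a φ-commutative
Banach algebra such that φ(x²) = 0 implies φ(x) = 0 is an n-homomorphism. -/
theorem nJordan_is_nHom_of_square_condition
    {A B : Type*} [NormedRing A] [NormedAlgebra ℂ A] [CompleteSpace A]
    [NormedRing B] [NormedAlgebra ℂ B] [CompleteSpace B]
    (n : ℕ) (hn : 2 ≤ n)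
    (φ : A →ₗ[ℂ] B)
    (hJ : ∀ a : A, φ (a ^ n) = φ a ^ n)
    (hcomm : ∀ a b : A, φ a * φ b = φ b * φ a)
    (hsq : ∀ x : A, φ (x ^ 2) = 0 → φ x = 0) :
    ∀ a : Fin n → A, φ ((List.ofFn a).prod) = ((List.ofFn a).map φ).prod := by
  have coeff_lemma := fun (m : ℕ) (b : ℕ → B) => coeff_zero_of_forall_ne m b
  have key : ∀ (x : A) (k : ℕ), k ≤ n → φ (x ^ k) = φ 1 ^ (n - k) * φ x ^ k := by
    intro x k hk
    have hc1 : Commute (φ x) (φ 1) := hcomm x 1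
    have main : ∀ t : ℂ, ∑ j ∈ Finset.range (n + 1),
        t ^ j • ((n.choose j : ℂ) • (φ (x ^ j) - φ 1 ^ (n - j) * φ x ^ j)) = 0 := by
      intro t
      have hL : (t • x + 1) ^ n = ∑ j ∈ Finset.range (n + 1),
          t ^ j • (x ^ j * (n.choose j : A)) := by
        rw [(Commute.one_right (t • x)).add_pow]
        exact Finset.sum_congr rfl fun j _ => by rw [one_pow, mul_one, smul_pow, smul_mul_assoc]
      have hR : (t • φ x + φ 1) ^ n = ∑ j ∈ Finset.range (n + 1),
          t ^ j • (φ x ^ j * φ 1 ^ (n - j) * (n.choose j : B)) := by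
        rw [(hc1.smul_left t).add_pow]
        exact Finset.sum_congr rfl fun j _ => by
          rw [smul_pow, smul_mul_assoc, smul_mul_assoc]
      have hsum : ∑ j ∈ Finset.range (n + 1), t ^ j • ((n.choose j : ℂ) • φ (x ^ j)) =
          ∑ j ∈ Finset.range (n + 1), t ^ j • ((n.choose j : ℂ) • (φ 1 ^ (n - j) * φ x ^ j)) := by
        calc ∑ j ∈ Finset.range (n + 1), t ^ j • ((n.choose j : ℂ) • φ (x ^ j))
            = φ ((t • x + 1) ^ n) := by
              rw [hL, map_sum]
              refine Finset.sum_congr rfl fun j _ => ?_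
              rw [map_smul]
              congr 1
              rw [Nat.cast_smul_eq_nsmul, ← map_nsmul, nsmul_eq_mul, (Nat.cast_commute _ _).eq]
          _ = (t • φ x + φ 1) ^ n := by rw [hJ, map_add, map_smul]
          _ = ∑ j ∈ Finset.range (n + 1),
              t ^ j • ((n.choose j : ℂ) • (φ 1 ^ (n - j) * φ x ^ j)) := by
              rw [hR]
              refine Finset.sum_congr rfl fun j _ => ?_
              congr 1
              rw [(hc1.pow_pow j (n - j)).eq, Nat.cast_smul_eq_nsmul, nsmul_eq_mul,
                ← (Nat.cast_commute _ _).eq]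
      simp only [smul_sub, Finset.sum_sub_distrib, hsum, sub_self]
    have hb := coeff_lemma (n + 1) _ (fun t _ => main t) k (by omega)
    have hc : ((n.choose k : ℂ)) ≠ 0 := Nat.cast_ne_zero.mpr (Nat.choose_pos hk).ne'
    have := congrArg (fun z => ((n.choose k : ℂ))⁻¹ • z) hb
    simp only [smul_smul, inv_mul_cancel₀ hc, one_smul, smul_zero] at this
    exact sub_eq_zero.mp this
  -- the commutative subalgebra generated by the range of φ
  set S := Algebra.adjoin ℂ (Set.range ⇑φ) with hS
  letI : CommRing S := Algebra.adjoinCommRingOfComm ℂ (by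
    rintro _ ⟨x, rfl⟩ _ ⟨y, rfl⟩; exact hcomm x y)
  set ψ : A → S := fun x => ⟨φ x, Algebra.subset_adjoin ⟨x, rfl⟩⟩ with hψ
  have hψadd : ∀ x y : A, ψ (x + y) = ψ x + ψ y := fun x y => Subtype.ext (map_add φ x y)
  have hψsub : ∀ x y : A, ψ (x - y) = ψ x - ψ y := fun x y => Subtype.ext (map_sub φ x y)
  set v : S := ψ 1 with hv
  -- transferred identities
  have hv1 : ∀ x : A, ψ x = v ^ (n - 1) * ψ x := by
    intro x
    refine Subtype.ext ?_
    show φ x = (φ 1) ^ (n - 1) * φ x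
    simpa using key x 1 (by omega)
  have hv2 : ∀ x : A, ψ (x ^ 2) = v ^ (n - 2) * ψ x ^ 2 := by
    intro x
    exact Subtype.ext (key x 2 hn)
  -- Jordan identity
  have hJorSum : ∀ x y : A, ψ (x * y) + ψ (y * x) = 2 * v ^ (n - 2) * (ψ x * ψ y) := by
    intro x y
    have e1 : ψ ((x + y) ^ 2) = ψ (x ^ 2) + (ψ (x * y) + ψ (y * x)) + ψ (y ^ 2) := by
      refine Subtype.ext ?_
      show φ ((x + y) ^ 2) = φ (x ^ 2) + (φ (x * y) + φ (y * x)) + φ (y ^ 2)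
      rw [← map_add, ← map_add, ← map_add]
      congr 1
      noncomm_ring
    have h := hv2 (x + y)
    rw [e1, hψadd] at h
    linear_combination h - hv2 x - hv2 y
  have hdiv2 : ∀ s t : S, s + s = t + t → s = t := by
    intro s t h
    have h2 : (2 : ℂ) • s = (2 : ℂ) • t := by rw [two_smul, two_smul]; exact h
    have := congrArg (fun z => ((2 : ℂ))⁻¹ • z) h2
    simpa [smul_smul] using this
  -- ψ (x * y * x)
  have hxyx : ∀ x y : A, ψ (x * y * x) = v ^ (n - 2) * v ^ (n - 2) * (ψ x ^ 2 * ψ y) := by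
    intro x y
    have eA : ψ (x * y * x) + ψ (x * y * x) =
        (ψ (x * (x * y + y * x)) + ψ ((x * y + y * x) * x)) - (ψ (x ^ 2 * y) + ψ (y * x ^ 2)) := by
      have e0 : x * y * x + x * y * x =
          (x * (x * y + y * x) + (x * y + y * x) * x) - (x ^ 2 * y + y * x ^ 2) := by
        noncomm_ring
      rw [← hψadd (x * (x * y + y * x)) ((x * y + y * x) * x), ← hψadd (x ^ 2 * y), ← hψsub, ← hψadd (x * y * x), e0]
    apply hdiv2
    linear_combination eA + hJorSum x (x * y + y * x)
      + (2 * v ^ (n - 2) * ψ x) * hψadd (x * y) (y * x)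
      + (2 * v ^ (n - 2) * ψ x) * hJorSum x y
      - hJorSum (x ^ 2) y - (2 * v ^ (n - 2) * ψ y) * hv2 x
  -- product relation
  have hpq : ∀ x y : A, v ^ (n - 2) * (ψ (x * y) * ψ (y * x)) =
      v ^ (n - 2) * v ^ (n - 2) * v ^ (n - 2) * (ψ x ^ 2 * ψ y ^ 2) := by
    intro x y
    have eB : ψ ((x * y) * (y * x)) + ψ ((y * x) * (x * y)) =
        ψ (x * y ^ 2 * x) + ψ (y * x ^ 2 * y) := by
      have e0 : (x * y) * (y * x) + (y * x) * (x * y) = x * y ^ 2 * x + y * x ^ 2 * y := by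
        noncomm_ring
      rw [← hψadd, ← hψadd, e0]
    have h := hJorSum (x * y) (y * x)
    rw [eB, hxyx x (y ^ 2), hxyx y (x ^ 2)] at h
    apply hdiv2
    linear_combination (-1 : ↥S) * h + (v ^ (n - 2) * v ^ (n - 2) * ψ x ^ 2) * hv2 y
      + (v ^ (n - 2) * v ^ (n - 2) * ψ y ^ 2) * hv2 x
  -- square of commutator maps to zero
  have hc2 : ∀ x y : A, ψ ((x * y - y * x) ^ 2) = 0 := by
    intro x y
    have eC : ψ ((x * y - y * x) ^ 2) =
        ψ ((x * y) ^ 2) + ψ ((y * x) ^ 2) - (ψ (x * y ^ 2 * x) + ψ (y * x ^ 2 * y)) := by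
      have e0 : (x * y - y * x) ^ 2 =
          ((x * y) ^ 2 + (y * x) ^ 2) - (x * y ^ 2 * x + y * x ^ 2 * y) := by
        noncomm_ring
      rw [← hψadd ((x * y) ^ 2), ← hψadd (x * y ^ 2 * x), ← hψsub, e0]
    rw [eC, hv2 (x * y), hv2 (y * x), hxyx x (y ^ 2), hxyx y (x ^ 2), hv2 x, hv2 y]
    linear_combination (v ^ (n - 2) * (ψ (x * y) + ψ (y * x) + 2 * v ^ (n - 2) * (ψ x * ψ y)))
      * hJorSum x y - 2 * hpq x y
  -- multiplicativity
  have hmul : ∀ x y : A, ψ (x * y) = v ^ (n - 2) * (ψ x * ψ y) := by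
    intro x y
    have h0 : φ (x * y - y * x) = 0 := by
      apply hsq
      have := hc2 x y
      exact congrArg Subtype.val this
    have hpe : ψ (x * y) = ψ (y * x) := by
      refine Subtype.ext ?_
      have h1 := map_sub φ (x * y) (y * x)
      exact sub_eq_zero.mp (h1.symm.trans h0)
    apply hdiv2
    have h := hJorSum x y
    rw [← hpe] at h
    linear_combination h
  -- product over lists
  have hlist : ∀ l : List A, l ≠ [] →
      ψ l.prod = v ^ ((n - 2) * (l.length - 1)) * (l.map ψ).prod := by
    intro l
    induction l with
    | nil => exact fun h => absurd rfl h
    | cons a l ih =>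
      intro _
      by_cases hl : l = []
      · subst hl; simp
      · have hlen : l.length - 1 + 1 = l.length := Nat.succ_pred_eq_of_pos (List.length_pos_iff.mpr hl)
        have hexp : (n - 2) * ((a :: l).length - 1) = (n - 2) + (n - 2) * (l.length - 1) := by
          simp only [List.length_cons, Nat.add_sub_cancel]
          conv_lhs => rw [← hlen]
          rw [Nat.mul_succ, Nat.add_comm]
        rw [List.prod_cons, hmul a l.prod, ih hl, hexp, pow_add, List.map_cons, List.prod_cons]
        ring
  -- absorption of powers of v
  have habs : ∀ (k : ℕ) (x : A), v ^ (k * (n - 1)) * ψ x = ψ x := by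
    intro k
    induction k with
    | zero => intro x; simp
    | succ k ih =>
      intro x
      have : (k + 1) * (n - 1) = (n - 1) + k * (n - 1) := by ring
      rw [this, pow_add, mul_assoc, ih x, ← hv1 x]
  -- conclusion
  intro a
  set l : List A := List.ofFn a with hl
  have hlen : l.length = n := by simp [hl]
  have hne : l ≠ [] := by
    intro h
    rw [h] at hlen
    simp at hlen
    omega
  obtain ⟨x, t, hxt⟩ := List.exists_cons_of_ne_nil hne
  have hfin : ψ l.prod = (l.map ψ).prod := by
    rw [hlist l hne, hlen, hxt, List.map_cons, List.prod_cons, ← mul_assoc]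
    congr 1
    have : (n - 2) * (n - 1) = (n - 2) * (n - 1) := rfl
    exact habs (n - 2) x
  have hcoe : φ l.prod = ((l.map ψ).prod : B) := congrArg Subtype.val hfin
  rw [hcoe, SubmonoidClass.coe_list_prod, List.map_map]
  rfl
end

section
/- Let φ : A → B be a 3-Jordan homomorphism from an algebra A into a φ-commutative algebra B such that φ(ab − ba) = 0 for all a, b ∈ A. Then φ is a mixed Jordan homomorphism: φ(b² a) = φ(b)² φ(a) for all a, b ∈ A. -/
/-- Cube of a sum of commuting elements, in additive form. -/
lemma cube_add_comm {B : Type*} [Ring B] (x y : B) (h : x * y = y * x) :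
    (x + y) ^ 3 = x ^ 3 + (x ^ 2 * y + x ^ 2 * y + x ^ 2 * y)
      + (x * y ^ 2 + x * y ^ 2 + x * y ^ 2) + y ^ 3 := by
  have hyx : y * x = x * y := h.symm
  have e1 : x * y * x = x * x * y := by rw [mul_assoc, hyx, ← mul_assoc]
  have e2 : y * x * x = x * x * y := by rw [hyx, mul_assoc, hyx, ← mul_assoc]
  have e3 : y * x * y = x * y * y := by rw [hyx]
  have e4 : y * y * x = x * y * y := by rw [mul_assoc, hyx, ← mul_assoc, hyx]
  calc (x + y) ^ 3
      = x*x*x + x*x*y + x*y*x + y*x*x + x*y*y + y*x*y + y*y*x + y*y*y := by noncomm_ring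
    _ = x*x*x + x*x*y + x*x*y + x*x*y + x*y*y + x*y*y + x*y*y + y*y*y := by
        rw [e1, e2, e3, e4]
    _ = _ := by noncomm_ring

/-- A 3-Jordan homomorphism into a φ-commutative algebra that vanishes on
commutators is a mixed Jordan homomorphism. -/
theorem threeJordan_is_mixed_jordan
    {A B : Type*} [Ring A] [Ring B] [Algebra ℂ A] [Algebra ℂ B]
    (φ : A →ₗ[ℂ] B)
    (hJ : ∀ x : A, φ (x ^ 3) = φ x ^ 3)
    (hcomm : ∀ a b : A, φ a * φ b = φ b * φ a)
    (hLie : ∀ a b : A, φ (a * b - b * a) = 0) :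
    ∀ a b : A, φ (b ^ 2 * a) = φ b ^ 2 * φ a := by
  intro a b
  have swap : ∀ x y : A, φ (x * y) = φ (y * x) := by
    intro x y
    have h := hLie x y
    rw [map_sub, sub_eq_zero] at h
    exact h
  -- all three degree-(2,1) words have the same image
  have k1 : φ (b * a * b) = φ (b ^ 2 * a) := by
    calc φ (b * a * b) = φ (b * (b * a)) := swap (b * a) b
      _ = φ (b ^ 2 * a) := by rw [show b * (b * a) = b ^ 2 * a by noncomm_ring]
  have k2 : φ (a * b ^ 2) = φ (b ^ 2 * a) := swap a (b ^ 2)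
  have k3 : φ (a * b * a) = φ (a ^ 2 * b) := by
    calc φ (a * b * a) = φ (a * (a * b)) := swap (a * b) a
      _ = φ (a ^ 2 * b) := by rw [show a * (a * b) = a ^ 2 * b by noncomm_ring]
  have k4 : φ (b * a ^ 2) = φ (a ^ 2 * b) := swap b (a ^ 2)
  -- expand (b+a)^3 and (b-a)^3 in A
  have ea1 : (b + a) ^ 3 = b ^ 3 + (b ^ 2 * a + b * a * b + a * b ^ 2)
      + (a ^ 2 * b + a * b * a + b * a ^ 2) + a ^ 3 := by noncomm_ring
  have ea2 : (b - a) ^ 3 = b ^ 3 - (b ^ 2 * a + b * a * b + a * b ^ 2)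
      + (a ^ 2 * b + a * b * a + b * a ^ 2) - a ^ 3 := by noncomm_ring
  have hc : φ b * φ a = φ a * φ b := hcomm b a
  have hcn : φ b * (-φ a) = (-φ a) * φ b := by rw [mul_neg, neg_mul, hc]
  have h1 := hJ (b + a)
  have h2 := hJ (b - a)
  rw [ea1, map_add φ b a] at h1
  rw [ea2, map_sub φ b a] at h2
  rw [cube_add_comm (φ b) (φ a) hc] at h1
  rw [sub_eq_add_neg (φ b) (φ a), cube_add_comm (φ b) (-φ a) hcn] at h2
  simp only [map_add, map_sub] at h1 h2
  rw [k1, k2, k3, k4] at h1 h2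
  have h2' : φ (b ^ 3) - (φ (b ^ 2 * a) + φ (b ^ 2 * a) + φ (b ^ 2 * a))
      + (φ (a ^ 2 * b) + φ (a ^ 2 * b) + φ (a ^ 2 * b)) - φ (a ^ 3)
      = φ b ^ 3 - (φ b ^ 2 * φ a + φ b ^ 2 * φ a + φ b ^ 2 * φ a)
      + (φ b * φ a ^ 2 + φ b * φ a ^ 2 + φ b * φ a ^ 2) - φ a ^ 3 := by
    rw [h2]; noncomm_ring
  have h6 : (6 : ℤ) • φ (b ^ 2 * a) = (6 : ℤ) • (φ b ^ 2 * φ a) := by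
    have d := congrArg₂ (fun s t => s - t) h1 h2'
    rw [hJ a] at d
    abel_nf at d ⊢
    rw [add_comm (2 • φ a ^ 3)] at d
    exact add_right_cancel d
  have h6' : (6 : ℂ) • φ (b ^ 2 * a) = (6 : ℂ) • (φ b ^ 2 * φ a) := by
    rw [show ((6 : ℂ)) = ((6 : ℤ) : ℂ) by norm_num, Int.cast_smul_eq_zsmul,
      Int.cast_smul_eq_zsmul]
    exact h6
  exact smul_right_injective B (by norm_num : (6 : ℂ) ≠ 0) h6'
end

section
/- Every unital mixed (n+1)-Jordan homomorphism φ : A → B between unital algebras is a homomorphism, i.e., φ(ab) = φ(a)φ(b) for all a, b ∈ A. -/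
/-- If a "polynomial function" with coefficients in a ℂ-vector space vanishes
everywhere, all coefficients vanish. -/
lemma aux_coeffs_zero {M : Type*} [AddCommGroup M] [Module ℂ M] (N : ℕ) (v : ℕ → M)
    (h : ∀ r : ℂ, ∑ k ∈ Finset.range N, r ^ k • v k = 0) :
    ∀ k < N, v k = 0 := by
  intro k hk
  rw [← Module.forall_dual_apply_eq_zero_iff ℂ]
  intro g
  have hg : ∀ r : ℂ, ∑ j ∈ Finset.range N, g (v j) * r ^ j = 0 := by
    intro r
    have := congrArg g (h r)
    simpa [map_sum, smul_eq_mul, mul_comm] using this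
  set p : Polynomial ℂ := ∑ j ∈ Finset.range N, Polynomial.C (g (v j)) * Polynomial.X ^ j with hpdef
  have hp : p = 0 := by
    apply Polynomial.funext
    intro r
    simp [hpdef, Polynomial.eval_finset_sum, hg r]
  have hc := congrArg (fun q => Polynomial.coeff q k) hp
  simpa [hpdef, Polynomial.finset_sum_coeff, Polynomial.coeff_C_mul,
    Polynomial.coeff_X_pow, Finset.sum_ite_eq', hk] using hc

/-- Every unital mixed (n+1)-Jordan homomorphism between unital algebras
is a homomorphism. -/
theorem unital_mixed_nJordan_is_hom
    {A B : Type*} [Ring A] [Ring B] [Algebra ℂ A] [Algebra ℂ B]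
    (n : ℕ) (hn : 1 ≤ n)
    (φ : A →ₗ[ℂ] B) (hu : φ 1 = 1)
    (hφ : ∀ a b : A, φ (a ^ (n + 1) * b) = φ a ^ (n + 1) * φ b) :
    ∀ a b : A, φ (a * b) = φ a * φ b := by
  intro a b
  set v : ℕ → B := fun k =>
    ((n + 1).choose k : ℂ) • (φ (a ^ (n + 1 - k) * b) - φ a ^ (n + 1 - k) * φ b) with hv
  have key : ∀ r : ℂ, ∑ k ∈ Finset.range (n + 2), r ^ k • v k = 0 := by
    intro r
    have hcomm : Commute (algebraMap ℂ A r) a := Algebra.commutes r a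
    have h1 := hφ (algebraMap ℂ A r + a) b
    -- expand LHS
    have hL : φ ((algebraMap ℂ A r + a) ^ (n + 1) * b)
        = ∑ k ∈ Finset.range (n + 2),
            r ^ k • (((n + 1).choose k : ℂ) • φ (a ^ (n + 1 - k) * b)) := by
      rw [hcomm.add_pow, Finset.sum_mul, map_sum]
      refine Finset.sum_congr rfl fun k _ => ?_
      have : algebraMap ℂ A r ^ k * a ^ (n + 1 - k) * ((n + 1).choose k : A) * b
          = r ^ k • (((n + 1).choose k : ℂ) • (a ^ (n + 1 - k) * b)) := by
        rw [← map_pow, Algebra.smul_def, Algebra.smul_def, map_pow, map_natCast]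
        simp only [mul_assoc]
        congr 1
        rw [← mul_assoc, ← (Nat.cast_commute ((n + 1).choose k) (a ^ (n + 1 - k))).eq,
          mul_assoc]
      rw [this, map_smul, map_smul]
    -- expand RHS
    have hφadd : φ (algebraMap ℂ A r + a) = algebraMap ℂ B r + φ a := by
      rw [map_add, Algebra.algebraMap_eq_smul_one, map_smul, hu,
        Algebra.algebraMap_eq_smul_one]
    have hR : φ (algebraMap ℂ A r + a) ^ (n + 1) * φ b
        = ∑ k ∈ Finset.range (n + 2),
            r ^ k • (((n + 1).choose k : ℂ) • (φ a ^ (n + 1 - k) * φ b)) := by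
      have hcommB : Commute (algebraMap ℂ B r) (φ a) := Algebra.commutes r (φ a)
      rw [hφadd, hcommB.add_pow, Finset.sum_mul]
      refine Finset.sum_congr rfl fun k _ => ?_
      rw [← map_pow, Algebra.smul_def, Algebra.smul_def, map_pow, map_natCast]
      simp only [mul_assoc]
      congr 1
      rw [← mul_assoc, ← (Nat.cast_commute ((n + 1).choose k) (φ a ^ (n + 1 - k))).eq,
        mul_assoc]
    rw [hL, hR] at h1
    simp only [hv, smul_sub, Finset.sum_sub_distrib, sub_eq_zero]
    exact h1
  have hvn := aux_coeffs_zero (n + 2) v key n (by omega)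
  rw [hv] at hvn
  have hs : n + 1 - n = 1 := by omega
  simp only [hs, pow_one, Nat.choose_succ_self_right] at hvn
  rcases smul_eq_zero.mp hvn with h2 | h2
  · rw [Nat.cast_eq_zero] at h2; omega
  · exact sub_eq_zero.mp h2
end

section
/- Every unital mixed (n+1)-Jordan homomorphism φ : A → B between unital algebras is a mixed n-Jordan homomorphism: φ(aⁿ b) = φ(a)ⁿ φ(b) for all a, b ∈ A. -/
open Finset Polynomial

/-- Vector-valued polynomial identity: if `∑ t^k • c k = 0` for all `t : ℂ`,
all coefficients vanish. -/
lemma vanish_coeffs {B : Type*} [AddCommGroup B] [Module ℂ B] {m : ℕ} (c : ℕ → B)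
    (h : ∀ t : ℂ, ∑ k ∈ Finset.range m, t ^ k • c k = 0) :
    ∀ k < m, c k = 0 := by
  intro k hk
  rw [← Module.forall_dual_apply_eq_zero_iff ℂ]
  intro l
  set p : Polynomial ℂ := ∑ j ∈ Finset.range m, Polynomial.C (l (c j)) * Polynomial.X ^ j with hp
  have hev : ∀ t : ℂ, p.eval t = 0 := by
    intro t
    have h1 : p.eval t = ∑ j ∈ Finset.range m, l (c j) * t ^ j := by
      simp [hp, Polynomial.eval_finset_sum]
    have h2 : l (∑ j ∈ Finset.range m, t ^ j • c j)
        = ∑ j ∈ Finset.range m, l (c j) * t ^ j := by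
      rw [map_sum]
      exact Finset.sum_congr rfl fun j _ => by rw [map_smul, smul_eq_mul, mul_comm]
    rw [h1, ← h2, h t, map_zero]
  have hp0 : p = 0 := Polynomial.zero_of_eval_zero p hev
  have := congrArg (fun q => Polynomial.coeff q k) hp0
  simpa [hp, Polynomial.finset_sum_coeff, Polynomial.coeff_C_mul,
    Polynomial.coeff_X_pow, Finset.sum_ite_eq' , hk] using this

lemma expand_pow_mul {R : Type*} [Ring R] [Algebra ℂ R] (x y : R) (t : ℂ) (m : ℕ) :
    (x + t • 1) ^ m * y
      = ∑ k ∈ Finset.range (m + 1), t ^ (m - k) • ((m.choose k) • (x ^ k * y)) := by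
  have hc : Commute x (t • (1 : R)) := (Commute.one_right x).smul_right t
  rw [hc.add_pow, Finset.sum_mul]
  refine Finset.sum_congr rfl fun k _ => ?_
  rw [_root_.smul_pow, one_pow, mul_smul_comm, mul_one, smul_mul_assoc, smul_mul_assoc]
  congr 1
  rw [nsmul_eq_mul, ← mul_assoc, (Nat.cast_commute (m.choose k) (x ^ k)).eq]

/-- Every unital mixed (n+1)-Jordan homomorphism is a mixed n-Jordan
homomorphism. -/
theorem unital_mixed_succ_jordan_is_mixed_nJordan
    {A B : Type*} [Ring A] [Ring B] [Algebra ℂ A] [Algebra ℂ B]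
    (n : ℕ) (hn : 1 ≤ n)
    (φ : A →ₗ[ℂ] B) (hu : φ 1 = 1)
    (hφ : ∀ a b : A, φ (a ^ (n + 1) * b) = φ a ^ (n + 1) * φ b) :
    ∀ a b : A, φ (a ^ n * b) = φ a ^ n * φ b := by
  intro a b
  set c : ℕ → B := fun k => ((n+1).choose k) • (φ (a ^ k * b) - φ a ^ k * φ b) with hcdef
  have key : ∀ t : ℂ, ∑ k ∈ Finset.range (n + 2), t ^ k • c (n + 1 - k) = 0 := by
    intro t
    have h1 : φ ((a + t • 1) ^ (n + 1) * b)
        = ∑ k ∈ Finset.range (n + 2), t ^ (n + 1 - k) • (((n+1).choose k) • φ (a ^ k * b)) := by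
      rw [expand_pow_mul, map_sum]
      exact Finset.sum_congr rfl fun k _ => by rw [map_smul, map_nsmul]
    have h2 : φ (a + t • 1) ^ (n + 1) * φ b
        = ∑ k ∈ Finset.range (n + 2), t ^ (n + 1 - k) • (((n+1).choose k) • (φ a ^ k * φ b)) := by
      rw [map_add, map_smul, hu, expand_pow_mul]
    have h3 : ∑ k ∈ Finset.range (n + 2), t ^ (n + 1 - k) • c k = 0 := by
      have := hφ (a + t • 1) b
      rw [h1, h2] at this
      rw [← sub_eq_zero] at this
      rw [← this, ← Finset.sum_sub_distrib]
      refine Finset.sum_congr rfl fun k _ => ?_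
      rw [hcdef]
      simp [smul_sub]
    calc ∑ k ∈ Finset.range (n + 2), t ^ k • c (n + 1 - k)
        = ∑ k ∈ Finset.range (n + 2), t ^ (n + 1 - (n + 1 - k)) • c (n + 1 - k) := by
          refine Finset.sum_congr rfl fun k hk => ?_
          have hk' := Finset.mem_range.mp hk
          rw [Nat.sub_sub_self (by omega : k ≤ n + 1)]
      _ = ∑ k ∈ Finset.range (n + 2), t ^ (n + 1 - k) • c k := by
          exact Finset.sum_range_reflect (fun k => t ^ (n + 1 - k) • c k) (n + 2)
      _ = 0 := h3
  have h1lt : (1 : ℕ) < n + 2 := by omega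
  have hc1 : c (n + 1 - 1) = 0 := vanish_coeffs _ key 1 h1lt
  rw [Nat.add_sub_cancel] at hc1
  rw [hcdef] at hc1
  simp only [Nat.choose_succ_self_right] at hc1
  have : ((n + 1 : ℕ) : ℂ) • (φ (a ^ n * b) - φ a ^ n * φ b) = 0 := by
    rw [Nat.cast_smul_eq_nsmul]; exact hc1
  rcases smul_eq_zero.mp this with h | h
  · exact absurd h (by exact_mod_cast Nat.succ_ne_zero n)
  · exact sub_eq_zero.mp h
end

section
/- Let φ : A → B be a linear map between Banach algebras satisfying ‖φ(aⁿ b) − φ(a)ⁿ φ(b)‖ ≤ δ(‖a‖ + ‖b‖) for all a, b ∈ A and some δ > 0. Then φ is an (n+1)-Jordan homomorphism: φ(a^(n+1)) = φ(a)^(n+1) for all a ∈ A. -/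
/-- An approximately mixed n-Jordan map with bound δ(‖a‖+‖b‖) is an
(n+1)-Jordan homomorphism. -/
theorem approx_mixed_jordan_plus_is_jordan
    {A B : Type*} [NormedRing A] [NormedAlgebra ℂ A] [CompleteSpace A]
    [NormedRing B] [NormedAlgebra ℂ B] [CompleteSpace B]
    (n : ℕ) (hn : 1 ≤ n) (δ : ℝ) (hδ : 0 < δ)
    (φ : A →ₗ[ℂ] B)
    (hφ : ∀ a b : A, ‖φ (a ^ n * b) - φ a ^ n * φ b‖ ≤ δ * (‖a‖ + ‖b‖)) :
    ∀ a : A, φ (a ^ (n + 1)) = φ a ^ (n + 1) := by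
  intro a
  by_contra h
  set X := φ (a ^ (n + 1)) - φ a ^ (n + 1) with hXdef
  have hXpos : 0 < ‖X‖ := by
    rw [norm_pos_iff, hXdef, sub_ne_zero]
    exact h
  have key : ∀ t : ℝ, 0 ≤ t → t ^ (n + 1) * ‖X‖ ≤ δ * (2 * (t * ‖a‖)) := by
    intro t ht
    have h1 := hφ ((t : ℂ) • a) ((t : ℂ) • a)
    have e1 : ((t : ℂ) • a) ^ n * ((t : ℂ) • a) = ((t : ℂ)) ^ (n + 1) • (a ^ (n + 1)) := by
      rw [smul_pow, smul_mul_smul_comm, ← pow_succ, ← pow_succ]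
    have e2 : φ ((t : ℂ) • a) ^ n * φ ((t : ℂ) • a)
        = ((t : ℂ)) ^ (n + 1) • (φ a ^ (n + 1)) := by
      rw [map_smul, smul_pow, smul_mul_smul_comm, ← pow_succ, ← pow_succ]
    rw [e1, e2, map_smul, ← smul_sub] at h1
    have hn1 : ‖((t : ℂ)) ^ (n + 1) • X‖ = t ^ (n + 1) * ‖X‖ := by
      rw [norm_smul, norm_pow, Complex.norm_real, Real.norm_of_nonneg ht]
    have hn2 : ‖(t : ℂ) • a‖ = t * ‖a‖ := by
      rw [norm_smul, Complex.norm_real, Real.norm_of_nonneg ht]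
    rw [hn1, hn2] at h1
    calc t ^ (n + 1) * ‖X‖ ≤ δ * (t * ‖a‖ + t * ‖a‖) := h1
      _ = δ * (2 * (t * ‖a‖)) := by ring
  obtain ⟨m, hm⟩ := exists_nat_gt (max 1 (δ * (2 * ‖a‖) / ‖X‖))
  set t : ℝ := (m : ℝ) with htdef
  have ht1 : 1 ≤ t := le_of_lt (lt_of_le_of_lt (le_max_left _ _) hm)
  have ht0 : 0 < t := lt_of_lt_of_le one_pos ht1
  have hk := key t (le_of_lt ht0)
  -- divide by t : t^n * ‖X‖ ≤ δ * 2 * ‖a‖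
  have hdiv : t ^ n * ‖X‖ ≤ δ * (2 * ‖a‖) := by
    have : t * (t ^ n * ‖X‖) ≤ t * (δ * (2 * ‖a‖)) := by
      calc t * (t ^ n * ‖X‖) = t ^ (n + 1) * ‖X‖ := by ring
        _ ≤ δ * (2 * (t * ‖a‖)) := hk
        _ = t * (δ * (2 * ‖a‖)) := by ring
    exact le_of_mul_le_mul_left this ht0
  have htn : t ≤ t ^ n := le_self_pow₀ ht1 (by omega)
  have hgt : δ * (2 * ‖a‖) / ‖X‖ < t := lt_of_le_of_lt (le_max_right _ _) hm
  have : δ * (2 * ‖a‖) < t * ‖X‖ := by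
    rwa [div_lt_iff₀ hXpos] at hgt
  have : δ * (2 * ‖a‖) < t ^ n * ‖X‖ :=
    lt_of_lt_of_le this (mul_le_mul_of_nonneg_right htn (le_of_lt hXpos))
  linarith
end

section
/- Let A, B be unital Banach algebras with B a right A-module, and let φ : A → B be a unital pseudo (n+1)-Jordan homomorphism with Jordan coefficient w ∈ A, i.e., φ(a^(n+1) w) = φ(a)^(n+1) · w for all a ∈ A. Then φ is a pseudo n-Jordan homomorphism with the same coefficient: φ(aⁿ w) = φ(a)ⁿ · w for all a ∈ A. -/
lemma aux_cast_term {R : Type*} [Ring R] (x y : R) (k c : ℕ) :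
    x * (k : R) * (c : R) * y = (k * c) • (x * y) := by
  have e1 : x * (k : R) = (k : R) * x := ((Nat.cast_commute k x).eq).symm
  have e2 : x * (c : R) = (c : R) * x := ((Nat.cast_commute c x).eq).symm
  rw [nsmul_eq_mul, Nat.cast_mul]
  calc x * (k : R) * (c : R) * y
      = (k : R) * x * (c : R) * y := by rw [e1]
    _ = (k : R) * (x * (c : R)) * y := by rw [mul_assoc (k : R) x (c : R)]
    _ = (k : R) * ((c : R) * x) * y := by rw [e2]
    _ = (k : R) * (c : R) * (x * y) := by
        rw [← mul_assoc (k : R) (c : R) x, mul_assoc ((k : R) * (c : R)) x y]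

lemma aux_poly_vanish {B : Type*} [NormedRing B] [NormedAlgebra ℂ B]
    (m : ℕ) (d : ℕ → B)
    (h : ∀ l : ℕ, ∑ j ∈ Finset.range m, ((l : ℂ) ^ j) • d j = 0) :
    ∀ j < m, d j = 0 := by
  intro j hj
  apply NormedSpace.eq_zero_of_forall_dual_eq_zero ℂ
  intro f
  set q : Polynomial ℂ := ∑ j ∈ Finset.range m, Polynomial.C (f (d j)) * Polynomial.X ^ j with hq
  have hroot : ∀ l : ℕ, q.IsRoot (l : ℂ) := by
    intro l
    have h2 := congrArg f (h l)
    simp only [map_sum, map_smul, smul_eq_mul, map_zero] at h2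
    simp only [Polynomial.IsRoot, hq, Polynomial.eval_finset_sum, Polynomial.eval_mul,
      Polynomial.eval_C, Polynomial.eval_pow, Polynomial.eval_X]
    rw [← h2]
    exact Finset.sum_congr rfl fun i _ => mul_comm _ _
  have hq0 : q = 0 := by
    refine Polynomial.eq_zero_of_infinite_isRoot q ?_
    refine Set.Infinite.mono ?_ (Set.infinite_range_of_injective (f := (Nat.cast : ℕ → ℂ))
      Nat.cast_injective)
    rintro x ⟨l, rfl⟩
    exact hroot l
  have hcj : q.coeff j = f (d j) := by
    simp only [hq, Polynomial.finset_sum_coeff, Polynomial.coeff_C_mul, Polynomial.coeff_X_pow]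
    rw [Finset.sum_eq_single j]
    · simp
    · intro b _ hb; simp [Ne.symm hb]
    · intro hnj; exact absurd (Finset.mem_range.mpr hj) hnj
  rw [← hcj, hq0, Polynomial.coeff_zero]


/-- Every unital pseudo (n+1)-Jordan homomorphism with Jordan coefficient w
is a pseudo n-Jordan homomorphism with the same coefficient. Here B is a
right A-module, encoded as a module over the multiplicative opposite Aᵐᵒᵖ,
and x · w := (op w) • x. -/
theorem unital_pseudo_succ_jordan_is_pseudo_nJordan
    {A B : Type*} [NormedRing A] [NormedAlgebra ℂ A] [CompleteSpace A]
    [NormedRing B] [NormedAlgebra ℂ B] [CompleteSpace B]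
    [Module Aᵐᵒᵖ B]
    (n : ℕ) (hn : 2 ≤ n)
    (φ : A →ₗ[ℂ] B) (hu : φ 1 = 1)
    (w : A)
    (hφ : ∀ a : A, φ (a ^ (n + 1) * w) = MulOpposite.op w • φ a ^ (n + 1)) :
    ∀ a : A, φ (a ^ n * w) = MulOpposite.op w • φ a ^ n := by
  intro a
  set c : ℕ → B := fun i => φ (a ^ i * w) - MulOpposite.op w • φ a ^ i with hcdef
  -- key identity with ℕ-smul
  have key : ∀ l : ℕ,
      ∑ i ∈ Finset.range (n + 2), (l ^ (n + 1 - i) * (n + 1).choose i) • c i = 0 := by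
    intro l
    have hφl : φ ((l : A)) = (l : B) := by
      have h1 : ((l : A)) = l • (1 : A) := by simp [nsmul_eq_mul]
      rw [h1, map_nsmul, hu]
      simp [nsmul_eq_mul]
    have expandA : (a + (l : A)) ^ (n + 1)
        = ∑ i ∈ Finset.range (n + 2), a ^ i * (l : A) ^ (n + 1 - i) * ((n + 1).choose i : A) :=
      (Nat.commute_cast a l).add_pow (n + 1)
    have expandB : (φ a + (l : B)) ^ (n + 1)
        = ∑ i ∈ Finset.range (n + 2), φ a ^ i * (l : B) ^ (n + 1 - i) * ((n + 1).choose i : B) :=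
      (Nat.commute_cast (φ a) l).add_pow (n + 1)
    have hmain := hφ (a + (l : A))
    have hL : φ ((a + (l : A)) ^ (n + 1) * w)
        = ∑ i ∈ Finset.range (n + 2),
            (l ^ (n + 1 - i) * (n + 1).choose i) • φ (a ^ i * w) := by
      rw [expandA, Finset.sum_mul, map_sum]
      refine Finset.sum_congr rfl fun i _ => ?_
      rw [show a ^ i * (l : A) ^ (n + 1 - i) * ((n + 1).choose i : A) * w
          = (l ^ (n + 1 - i) * (n + 1).choose i) • (a ^ i * w) by
        rw [← Nat.cast_pow]; exact aux_cast_term _ _ _ _]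
      exact map_nsmul φ _ _
    have hR : MulOpposite.op w • (φ (a + (l : A))) ^ (n + 1)
        = ∑ i ∈ Finset.range (n + 2),
            (l ^ (n + 1 - i) * (n + 1).choose i) • (MulOpposite.op w • φ a ^ i) := by
      rw [map_add, hφl, expandB, Finset.smul_sum]
      refine Finset.sum_congr rfl fun i _ => ?_
      rw [show φ a ^ i * (l : B) ^ (n + 1 - i) * ((n + 1).choose i : B)
          = (l ^ (n + 1 - i) * (n + 1).choose i) • (φ a ^ i) by
        rw [← Nat.cast_pow]
        simpa using aux_cast_term (φ a ^ i) 1 (l ^ (n + 1 - i)) ((n + 1).choose i)]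
      exact smul_comm _ _ _
    rw [hL, hR] at hmain
    simp only [hcdef, smul_sub]
    rw [Finset.sum_sub_distrib, hmain, sub_self]
  -- convert to ℂ-smul and reindex
  set d : ℕ → B := fun j => (((n + 1).choose (n + 1 - j) : ℂ)) • c (n + 1 - j) with hddef
  have key2 : ∀ l : ℕ, ∑ j ∈ Finset.range (n + 2), ((l : ℂ) ^ j) • d j = 0 := by
    intro l
    rw [← Finset.sum_range_reflect]
    rw [← key l]
    refine Finset.sum_congr rfl fun i hi => ?_
    have hi' : i ≤ n + 1 := Nat.lt_succ_iff.mp (Finset.mem_range.mp hi)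
    have h1 : n + 2 - 1 - i = n + 1 - i := by omega
    have h2 : n + 1 - (n + 1 - i) = i := by omega
    rw [h1, hddef]
    simp only [h2]
    rw [smul_smul, ← Nat.cast_smul_eq_nsmul ℂ]
    push_cast
    ring_nf
  have hd1 : d 1 = 0 := aux_poly_vanish (n + 2) d key2 1 (by omega)
  have hcn : c n = 0 := by
    have h2 : n + 1 - 1 = n := by omega
    rw [hddef] at hd1
    simp only [h2, Nat.choose_succ_self_right] at hd1
    have hne : ((n + 1 : ℕ) : ℂ) ≠ 0 := by exact_mod_cast Nat.succ_ne_zero n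
    have h3 := smul_eq_zero.mp hd1
    rcases h3 with h3 | h3
    · exact absurd (by exact_mod_cast h3) (Nat.succ_ne_zero n)
    · exact h3
  have := hcn
  rw [hcdef] at this
  exact sub_eq_zero.mp this
end

section
/- Define φ : U₂(ℝ) → U₂(ℝ) on upper-triangular 2×2 real matrices by φ([[a,b],[0,c]]) = [[a,b],[0,0]]. Then for every n ≥ 2 and every w = [[s,t],[0,0]] with s, t ∈ ℝ, φ(Xⁿ w) = φ(X)ⁿ w for all X ∈ U₂(ℝ) (so φ is a pseudo n-Jordan homomorphism), yet φ is not an n-Jordan homomorphism (there exists X with φ(Xⁿ) ≠ φ(X)ⁿ). -/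
open Matrix

/-- The linear map on 2×2 upper triangular real matrices sending
[[a,b],[0,c]] to [[a,b],[0,0]]. -/
noncomputable def psiUT (X : Matrix (Fin 2) (Fin 2) ℝ) : Matrix (Fin 2) (Fin 2) ℝ :=
  !![X 0 0, X 0 1; 0, 0]

lemma pow_entries (X : Matrix (Fin 2) (Fin 2) ℝ) (h : X 1 0 = 0) (n : ℕ) :
    (X ^ n) 0 0 = (X 0 0) ^ n ∧ (X ^ n) 1 0 = 0 := by
  induction n with
  | zero => simp [Matrix.one_apply]
  | succ n ih =>
    rw [pow_succ, pow_succ]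
    constructor <;>
      rw [Matrix.mul_apply, Fin.sum_univ_two] <;>
      simp [ih.1, ih.2, h]

lemma pow_unip (n : ℕ) : (!![1, (1:ℝ); 0, 1]) ^ n = !![1, (n:ℝ); 0, 1] := by
  induction n with
  | zero => simp [Matrix.one_fin_two]
  | succ n ih =>
    rw [pow_succ, ih]
    ext i j
    fin_cases i <;> fin_cases j <;>
      simp [Matrix.mul_apply, Fin.sum_univ_two, add_comm]

lemma pow_idem (n : ℕ) (hn : 1 ≤ n) :
    (!![1, (1:ℝ); 0, 0]) ^ n = !![1, (1:ℝ); 0, 0] := by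
  induction n with
  | zero => omega
  | succ n ih =>
    rcases Nat.eq_or_lt_of_le hn with h | h
    · simp [← h]
    · rw [pow_succ, ih (by omega)]
      ext i j
      fin_cases i <;> fin_cases j <;>
        simp [Matrix.mul_apply, Fin.sum_univ_two]

/-- ψ is a pseudo n-Jordan homomorphism on U₂(ℝ) with any coefficient
w = [[s,t],[0,0]], but is not an n-Jordan homomorphism. -/
theorem psiUT_pseudo_nJordan_not_nJordan :
    ∀ n : ℕ, 2 ≤ n →
      (∀ s t : ℝ, ∀ X : Matrix (Fin 2) (Fin 2) ℝ, X 1 0 = 0 →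
        psiUT (X ^ n * !![s, t; 0, 0]) = (psiUT X) ^ n * !![s, t; 0, 0]) ∧
      (∃ X : Matrix (Fin 2) (Fin 2) ℝ, X 1 0 = 0 ∧ psiUT (X ^ n) ≠ (psiUT X) ^ n) := by
  intro n hn
  constructor
  · intro s t X hX
    have hB : psiUT X 1 0 = 0 := by simp [psiUT]
    have h1 := pow_entries X hX n
    have h2 := pow_entries (psiUT X) hB n
    have hB0 : psiUT X 0 0 = X 0 0 := by simp [psiUT]
    simp only [psiUT] at h2
    ext i j
    fin_cases i <;> fin_cases j <;>
      simp [psiUT, Matrix.mul_apply, Fin.sum_univ_two, h1.1, h1.2, h2.1, h2.2, hB0]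
  · refine ⟨!![1, 1; 0, 1], by simp, ?_⟩
    have hψ : psiUT !![1, (1:ℝ); 0, 1] = !![1, 1; 0, 0] := by
      simp [psiUT]
    rw [pow_unip, hψ, pow_idem n (by omega)]
    intro h
    have := congrFun (congrFun h 0) 1
    simp [psiUT] at this
    omega
end

section
/- Let φ : A → ℂ be a mixed Jordan homomorphism from a Banach algebra A (φ(a²b) = φ(a)²φ(b) for all a, b). If there exists x₀ ∈ A with ‖x₀‖ < 1 and φ(x₀) = 1, then φ(u)² = −φ(u²) for all u ∈ A (φ is a co-Jordan homomorphism). -/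
/-- A mixed Jordan homomorphism φ : A → ℂ on a Banach algebra with a point
x₀ of norm < 1 mapped to 1 is a co-Jordan homomorphism: φ(u)² = −φ(u²). -/
theorem mixed_jordan_to_C_is_coJordan
    {A : Type*} [NormedRing A] [NormedAlgebra ℂ A] [CompleteSpace A]
    (φ : A →ₗ[ℂ] ℂ)
    (hφ : ∀ a b : A, φ (a ^ 2 * b) = φ a ^ 2 * φ b)
    (x₀ : A) (hx₀ : ‖x₀‖ < 1) (hx₀1 : φ x₀ = 1) :
    ∀ u : A, φ u ^ 2 = -φ (u ^ 2) := by
  -- `1 - x₀` is a unit; let `z` be its inverse.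
  set w : Aˣ := Units.oneSub x₀ hx₀ with hw
  set z : A := ((w⁻¹ : Aˣ) : A) with hz
  have hmul : (1 - x₀) * z = 1 := by
    have := w.mul_inv
    simpa [hw, hz] using this
  -- `z = 1 + x₀ * z`, hence `z = 1 + x₀ + x₀ ^ 2 * z`.
  have h1 : z = 1 + x₀ * z := by
    have h : z - x₀ * z = 1 := by rw [← one_mul z, ← mul_assoc]; simpa [sub_mul] using hmul
    rw [sub_eq_iff_eq_add'] at h; rw [add_comm]; exact h
  have h2 : z = 1 + x₀ + x₀ ^ 2 * z := by
    calc z = 1 + x₀ * z := h1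
    _ = 1 + x₀ * (1 + x₀ * z) := by rw [← h1]; exact h1
    _ = 1 + x₀ + x₀ ^ 2 * z := by noncomm_ring
  -- Apply φ to get φ(1) = -1.
  have hφ1 : φ (1 : A) = -1 := by
    have := congrArg φ h2
    rw [map_add, map_add, hφ x₀ z, hx₀1] at this
    linear_combination -this
  intro u
  have := hφ u 1
  rw [mul_one, hφ1] at this
  linear_combination this
end
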